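/- Process safety preservation: if σ ⊢ P✓ (P is closed and all channel constants occurring in P are in dom(σ)), then P,σ cannot take a ↯-labeled step, and whenever P,σ ⟶^α P',σ' in the resource-sensitive transition system, then σ' ⊢ P'✓. -/
import Mathlib


inductive Own | pub | pri
deriving DecidableEq

abbrev Chan := ℕ
abbrev Resource := Chan → Option Own

def Resource.dom (σ : Resource) : Set Chan := {c | (σ c).isSome}

def upd (σ : Resource) (c : Chan) (o : Own) : Resource :=
  fun d => if d = c then some o else σ d

/-- σ ∈ (σ₁ ∥ σ₂): parallel separation. -/
def PSep (σ σ₁ σ₂ : Resource) : Prop :=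
  σ.dom = σ₁.dom ∪ σ₂.dom ∧
  (∀ c, σ₁ c = some Own.pri → σ c = some Own.pri ∧ c ∉ σ₂.dom) ∧
  (∀ c, σ₂ c = some Own.pri → σ c = some Own.pri ∧ c ∉ σ₁.dom)

/-- public lifting σ̂ -/
def pubLift (σ : Resource) : Resource := fun c => (σ c).map fun _ => Own.pub

inductive Act
  | send (c d : Chan)
  | recv (c d : Chan)
  | alloc (c : Chan)
  | tau
  | fault
deriving DecidableEq

inductive ARes | ok (σ : Resource) | top | bot

def act : Act → Resource → ARes
  | .send c d, σ =>
      if (σ c).isSome ∧ (σ d).isSome then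
        if σ c = some Own.pub then .ok (upd σ d Own.pub) else .bot
      else .top
  | .recv c d, σ =>
      if (σ c).isSome then
        if σ c = some Own.pub ∧ σ d ≠ some Own.pri then .ok (upd σ d Own.pub) else .bot
      else .top
  | .alloc c, σ => if (σ c).isSome then .bot else .ok (upd σ c Own.pri)
  | .tau, σ => .ok σ
  | .fault, _ => .top

def dual : Act → Option Act
  | .send c d => some (.recv c d)
  | .recv c d => some (.send c d)
  | _ => none

abbrev Trace := List Act
abbrev Behavior := Resource → Set Trace

/-- Action observables |α|σ -/
def obsA : Act → Resource → Trace
  | .tau, _ => []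
  | .alloc _, _ => []
  | .fault, _ => [.fault]
  | .recv c d, _ => [.recv c d]
  | .send c d, σ => if σ d = some Own.pri then [.alloc d, .send c d] else [.send c d]

/-- Semantic prefixing α ▷ B -/
def pre (α : Act) (B : Behavior) : Behavior := fun σ =>
  {t | ∃ σ' u, act α σ = ARes.ok σ' ∧ u ∈ B σ' ∧ t = obsA α σ ++ u} ∪
  {t | act α σ = ARes.top ∧ t = [Act.fault]} ∪
  {[]}

/-- Trace interleaving t ∥ u -/
def inter : Trace → Trace → Behavior
  | [], [] => fun _ => {[]}
  | [], β :: u' => pre β (inter [] u')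
  | α :: t', [] => pre α (inter t' [])
  | α :: t', β :: u' =>
      pre α (inter t' (β :: u')) ⊔ pre β (inter (α :: t') u') ⊔
      (if dual α = some β then inter t' u' else ⊥)
  termination_by t u => t.length + u.length

/-- Channel expressions: variables or constants. -/
inductive Exp | var (x : ℕ) | ch (c : Chan)
deriving DecidableEq

/-- Prefixes: output ē e' and input e(x). -/
inductive Pre | out (e e' : Exp) | inp (e : Exp) (x : ℕ)
deriving DecidableEq

/-- π-calculus processes.  A summation is represented as a list of
prefixed processes built with `nil`/`sum` (so `nil` is the inert 0). -/
inductive Proc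
  | nil
  | sum (π : Pre) (P : Proc) (rest : Proc)   -- π.P + rest
  | choice (P Q : Proc)
  | nu (x : ℕ) (P : Proc)
  | par (P Q : Proc)
  | fix (X : ℕ) (P : Proc)
  | pvar (X : ℕ)

def substE (e : Exp) (x : ℕ) (c : Chan) : Exp :=
  match e with
  | .var y => if y = x then .ch c else .var y
  | .ch d => .ch d

def substPre (π : Pre) (x : ℕ) (c : Chan) : Pre :=
  match π with
  | .out e e' => .out (substE e x c) (substE e' x c)
  | .inp e y => .inp (substE e x c) y

/-- Substituting channel c for channel variable x. -/
def substC : Proc → ℕ → Chan → Proc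
  | .nil, _, _ => .nil
  | .sum (.out e e') P rest, x, c =>
      .sum (substPre (.out e e') x c) (substC P x c) (substC rest x c)
  | .sum (.inp e y) P rest, x, c =>
      .sum (substPre (.inp e y) x c) (if y = x then P else substC P x c)
        (substC rest x c)
  | .choice P Q, x, c => .choice (substC P x c) (substC Q x c)
  | .nu y P, x, c => .nu y (if y = x then P else substC P x c)
  | .par P Q, x, c => .par (substC P x c) (substC Q x c)
  | .fix X P, x, c => .fix X (substC P x c)
  | .pvar X, _, _ => .pvar X

/-- Substituting process Q for process variable X. -/
def substP : Proc → ℕ → Proc → Proc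
  | .nil, _, _ => .nil
  | .sum π P rest, X, Q => .sum π (substP P X Q) (substP rest X Q)
  | .choice P P', X, Q => .choice (substP P X Q) (substP P' X Q)
  | .nu y P, X, Q => .nu y (substP P X Q)
  | .par P P', X, Q => .par (substP P X Q) (substP P' X Q)
  | .fix Y P, X, Q => .fix Y (if Y = X then P else substP P X Q)
  | .pvar Y, X, Q => if Y = X then Q else .pvar Y

def fcvE : Exp → Set ℕ
  | .var x => {x}
  | .ch _ => ∅

/-- Free channel variables. -/
def fcv : Proc → Set ℕ
  | .nil => ∅
  | .sum (.out e e') P rest => fcvE e ∪ fcvE e' ∪ fcv P ∪ fcv rest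
  | .sum (.inp e y) P rest => fcvE e ∪ (fcv P \ {y}) ∪ fcv rest
  | .choice P Q => fcv P ∪ fcv Q
  | .nu y P => fcv P \ {y}
  | .par P Q => fcv P ∪ fcv Q
  | .fix _ P => fcv P
  | .pvar _ => ∅

/-- Free process variables. -/
def fpv : Proc → Set ℕ
  | .nil => ∅
  | .sum _ P rest => fpv P ∪ fpv rest
  | .choice P Q => fpv P ∪ fpv Q
  | .nu _ P => fpv P
  | .par P Q => fpv P ∪ fpv Q
  | .fix X P => fpv P \ {X}
  | .pvar X => {X}

def chansE : Exp → Set Chan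
  | .var _ => ∅
  | .ch c => {c}

/-- Channel constants occurring in a process. -/
def consts : Proc → Set Chan
  | .nil => ∅
  | .sum (.out e e') P rest => chansE e ∪ chansE e' ∪ consts P ∪ consts rest
  | .sum (.inp e _) P rest => chansE e ∪ consts P ∪ consts rest
  | .choice P Q => consts P ∪ consts Q
  | .nu _ P => consts P
  | .par P Q => consts P ∪ consts Q
  | .fix _ P => consts P
  | .pvar _ => ∅

def Closed (P : Proc) : Prop := fcv P = ∅ ∧ fpv P = ∅

/-- σ ⊢ P✓ -/
def Safe (σ : Resource) (P : Proc) : Prop := Closed P ∧ consts P ⊆ σ.dom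

/-- Action generation: P ⟶^α Q. -/
inductive Step : Proc → Act → Proc → Prop
  | send (c d : Chan) (P rest : Proc) :
      Step (.sum (.out (.ch c) (.ch d)) P rest) (.send c d) P
  | recv (c d : Chan) (x : ℕ) (P rest : Proc) :
      Step (.sum (.inp (.ch c) x) P rest) (.recv c d) (substC P x d)
  | sumRest {rest : Proc} {α : Act} {P' : Proc} (π : Pre) (P : Proc) :
      Step rest α P' → Step (.sum π P rest) α P'
  | chooseL (P Q : Proc) : Step (.choice P Q) .tau P
  | chooseR (P Q : Proc) : Step (.choice P Q) .tau Q
  | alloc (c : Chan) (x : ℕ) (P : Proc) :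
      Step (.nu x P) (.alloc c) (substC P x c)
  | unfold (X : ℕ) (P : Proc) :
      Step (.fix X P) .tau (substP P X (.fix X P))
  | parL {P α P'} (Q : Proc) : Step P α P' → Step (.par P Q) α (.par P' Q)
  | parR {Q α Q'} (P : Proc) : Step Q α Q' → Step (.par P Q) α (.par P Q')
  | comm {P α P' Q β Q'} : Step P α P' → Step Q β Q' → dual α = some β →
      Step (.par P Q) .tau (.par P' Q')

/-- Resource-sensitive stepping: P,σ ⟶^α P',σ'. -/
inductive RStep : Proc → Resource → Act → Proc → Resource → Prop
  | step {P α P' σ σ'} : Step P α P' → act α σ = ARes.ok σ' →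
      RStep P σ α P' σ'
  | fault {P α P' σ} : Step P α P' → act α σ = ARes.top →
      RStep P σ .fault .nil σ

/-- Safety observation O⟦P⟧σ (least fixpoint). -/
inductive Obs : Proc → Resource → Trace → Prop
  | eps (P : Proc) (σ : Resource) : Obs P σ []
  | step {P σ α P' σ' t} : RStep P σ α P' σ' → Obs P' σ' t →
      Obs P σ (obsA α σ ++ t)


-- Auxiliary lemmas

lemma fcvE_substE (e : Exp) (x : ℕ) (c : Chan) :
    fcvE (substE e x c) ⊆ fcvE e \ {x} := by
  cases e with
  | var y =>
    by_cases h : y = x <;> simp [substE, h, fcvE]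
  | ch d => simp [substE, fcvE]

lemma fcv_substC (P : Proc) (x : ℕ) (c : Chan) :
    fcv (substC P x c) ⊆ fcv P \ {x} := by
  induction P generalizing x with
  | nil => simp [substC, fcv]
  | sum π Q rest ih ihr =>
    cases π with
    | out e e' =>
      intro a ha
      simp [substC, substPre, fcv] at ha
      rcases ha with ((h | h) | h) | h
      · have := fcvE_substE e x c h; simp [fcv] at *; tauto
      · have := fcvE_substE e' x c h; simp [fcv] at *; tauto
      · have := ih x h; simp [fcv] at *; tauto
      · have := ihr x h; simp [fcv] at *; tauto
    | inp e y =>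
      intro a ha
      by_cases hyx : y = x
      · simp [substC, substPre, hyx, fcv] at ha
        rcases ha with (h | h) | h
        · have := fcvE_substE e x c h; simp [fcv, hyx] at *; tauto
        · simp [fcv, hyx]; tauto
        · have := ihr x h; simp [fcv, hyx] at *; tauto
      · simp [substC, substPre, hyx, fcv] at ha
        rcases ha with (h | h) | h
        · have := fcvE_substE e x c h; simp [fcv] at *; tauto
        · have := ih x h.1; simp [fcv] at *; tauto
        · have := ihr x h; simp [fcv] at *; tauto
  | choice Q R ihq ihr =>
    intro a ha; simp [substC, fcv] at ha
    rcases ha with h | h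
    · have := ihq x h; simp [fcv] at *; tauto
    · have := ihr x h; simp [fcv] at *; tauto
  | nu y Q ih =>
    intro a ha
    by_cases hyx : y = x
    · simp [substC, hyx, fcv] at ha
      simp [fcv, hyx]; tauto
    · simp [substC, hyx, fcv] at ha
      have := ih x ha.1; simp [fcv] at *; tauto
  | par Q R ihq ihr =>
    intro a ha; simp [substC, fcv] at ha
    rcases ha with h | h
    · have := ihq x h; simp [fcv] at *; tauto
    · have := ihr x h; simp [fcv] at *; tauto
  | fix X Q ih =>
    intro a ha; simp [substC, fcv] at ha
    have := ih x ha; simp [fcv] at *; tauto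
  | pvar X => simp [substC, fcv]

lemma fpv_substC (P : Proc) (x : ℕ) (c : Chan) :
    fpv (substC P x c) ⊆ fpv P := by
  induction P generalizing x with
  | nil => simp [substC, fpv]
  | sum π Q rest ih ihr =>
    cases π with
    | out e e' =>
      intro a ha; simp [substC, substPre, fpv] at ha ⊢
      rcases ha with h | h
      · exact Or.inl (ih x h)
      · exact Or.inr (ihr x h)
    | inp e y =>
      intro a ha
      by_cases hyx : y = x <;>
        simp [substC, substPre, hyx, fpv] at ha ⊢ <;>
        rcases ha with h | h
      · exact Or.inl h
      · exact Or.inr (ihr x h)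
      · exact Or.inl (ih x h)
      · exact Or.inr (ihr x h)
  | choice Q R ihq ihr =>
    intro a ha; simp [substC, fpv] at ha ⊢
    rcases ha with h | h
    · exact Or.inl (ihq x h)
    · exact Or.inr (ihr x h)
  | nu y Q ih =>
    intro a ha
    by_cases hyx : y = x <;> simp [substC, hyx, fpv] at ha ⊢
    · exact ha
    · exact ih x ha
  | par Q R ihq ihr =>
    intro a ha; simp [substC, fpv] at ha ⊢
    rcases ha with h | h
    · exact Or.inl (ihq x h)
    · exact Or.inr (ihr x h)
  | fix X Q ih =>
    intro a ha; simp [substC, fpv] at ha ⊢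
    exact ⟨ih x ha.1, ha.2⟩
  | pvar X => simp [substC, fpv]

lemma chansE_substE (e : Exp) (x : ℕ) (c : Chan) :
    chansE (substE e x c) ⊆ chansE e ∪ {c} := by
  cases e with
  | var y => by_cases h : y = x <;> simp [substE, h, chansE]
  | ch d => simp [substE, chansE]

lemma consts_substC (P : Proc) (x : ℕ) (c : Chan) :
    consts (substC P x c) ⊆ consts P ∪ {c} := by
  induction P generalizing x with
  | nil => simp [substC, consts]
  | sum π Q rest ih ihr =>
    cases π with
    | out e e' =>
      intro a ha; simp [substC, substPre, consts] at ha ⊢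
      rcases ha with ((h | h) | h) | h
      · have := chansE_substE e x c h; simp at this; tauto
      · have := chansE_substE e' x c h; simp at this; tauto
      · have := ih x h; simp at this; tauto
      · have := ihr x h; simp at this; tauto
    | inp e y =>
      intro a ha
      by_cases hyx : y = x <;>
        simp [substC, substPre, hyx, consts] at ha ⊢
      · rcases ha with (h | h) | h
        · have := chansE_substE e x c h; simp at this; tauto
        · tauto
        · have := ihr x h; simp at this; tauto
      · rcases ha with (h | h) | h
        · have := chansE_substE e x c h; simp at this; tauto
        · have := ih x h; simp at this; tauto
        · have := ihr x h; simp at this; tauto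
  | choice Q R ihq ihr =>
    intro a ha; simp [substC, consts] at ha ⊢
    rcases ha with h | h
    · have := ihq x h; simp at this; tauto
    · have := ihr x h; simp at this; tauto
  | nu y Q ih =>
    intro a ha
    by_cases hyx : y = x <;> simp [substC, hyx, consts] at ha ⊢
    · tauto
    · have := ih x ha; simp at this; tauto
  | par Q R ihq ihr =>
    intro a ha; simp [substC, consts] at ha ⊢
    rcases ha with h | h
    · have := ihq x h; simp at this; tauto
    · have := ihr x h; simp at this; tauto
  | fix X Q ih =>
    intro a ha; simp [substC, consts] at ha ⊢
    have := ih x ha; simp at this; tauto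
  | pvar X => simp [substC, consts]

lemma fcv_substP (P : Proc) (X : ℕ) (Q : Proc) :
    fcv (substP P X Q) ⊆ fcv P ∪ fcv Q := by
  induction P with
  | nil => simp [substP, fcv]
  | sum π R rest ih ihr =>
    cases π with
    | out e e' =>
      intro a ha; simp [substP, fcv] at ha ⊢
      rcases ha with ((h | h) | h) | h
      · tauto
      · tauto
      · have := ih h; simp at this; tauto
      · have := ihr h; simp at this; tauto
    | inp e y =>
      intro a ha; simp [substP, fcv] at ha ⊢
      rcases ha with (h | h) | h
      · tauto
      · have := ih h.1; simp at this; tauto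
      · have := ihr h; simp at this; tauto
  | choice R S ihr ihs =>
    intro a ha; simp [substP, fcv] at ha ⊢
    rcases ha with h | h
    · have := ihr h; simp at this; tauto
    · have := ihs h; simp at this; tauto
  | nu y R ih =>
    intro a ha; simp [substP, fcv] at ha ⊢
    have := ih ha.1; simp at this; tauto
  | par R S ihr ihs =>
    intro a ha; simp [substP, fcv] at ha ⊢
    rcases ha with h | h
    · have := ihr h; simp at this; tauto
    · have := ihs h; simp at this; tauto
  | fix Y R ih =>
    intro a ha
    by_cases hYX : Y = X <;> simp [substP, hYX, fcv] at ha ⊢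
    · tauto
    · have := ih ha; simp at this; tauto
  | pvar Y =>
    intro a ha
    by_cases hYX : Y = X <;> simp [substP, hYX, fcv] at ha ⊢
    · tauto

lemma consts_substP (P : Proc) (X : ℕ) (Q : Proc) :
    consts (substP P X Q) ⊆ consts P ∪ consts Q := by
  induction P with
  | nil => simp [substP, consts]
  | sum π R rest ih ihr =>
    cases π with
    | out e e' =>
      intro a ha; simp [substP, consts] at ha ⊢
      rcases ha with ((h | h) | h) | h
      · tauto
      · tauto
      · have := ih h; simp at this; tauto
      · have := ihr h; simp at this; tauto
    | inp e y =>
      intro a ha; simp [substP, consts] at ha ⊢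
      rcases ha with (h | h) | h
      · tauto
      · have := ih h; simp at this; tauto
      · have := ihr h; simp at this; tauto
  | choice R S ihr ihs =>
    intro a ha; simp [substP, consts] at ha ⊢
    rcases ha with h | h
    · have := ihr h; simp at this; tauto
    · have := ihs h; simp at this; tauto
  | nu y R ih =>
    intro a ha; simp [substP, consts] at ha ⊢
    have := ih ha; simp at this; tauto
  | par R S ihr ihs =>
    intro a ha; simp [substP, consts] at ha ⊢
    rcases ha with h | h
    · have := ihr h; simp at this; tauto
    · have := ihs h; simp at this; tauto
  | fix Y R ih =>
    intro a ha
    by_cases hYX : Y = X <;> simp [substP, hYX, consts] at ha ⊢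
    · tauto
    · have := ih ha; simp at this; tauto
  | pvar Y =>
    intro a ha
    by_cases hYX : Y = X <;> simp [substP, hYX, consts] at ha ⊢
    · tauto

lemma fpv_substP (P : Proc) (X : ℕ) (Q : Proc) :
    fpv (substP P X Q) ⊆ (fpv P \ {X}) ∪ fpv Q := by
  induction P with
  | nil => simp [substP, fpv]
  | sum π R rest ih ihr =>
    intro a ha; simp [substP, fpv] at ha ⊢
    rcases ha with h | h
    · have := ih h; simp at this; tauto
    · have := ihr h; simp at this; tauto
  | choice R S ihr ihs =>
    intro a ha; simp [substP, fpv] at ha ⊢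
    rcases ha with h | h
    · have := ihr h; simp at this; tauto
    · have := ihs h; simp at this; tauto
  | nu y R ih =>
    intro a ha; simp [substP, fpv] at ha ⊢
    have := ih ha; simp at this; tauto
  | par R S ihr ihs =>
    intro a ha; simp [substP, fpv] at ha ⊢
    rcases ha with h | h
    · have := ihr h; simp at this; tauto
    · have := ihs h; simp at this; tauto
  | fix Y R ih =>
    intro a ha
    by_cases hYX : Y = X <;> simp [substP, hYX, fpv] at ha ⊢
    · tauto
    · have := ih ha.1; simp at this; tauto
  | pvar Y =>
    intro a ha
    by_cases hYX : Y = X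
    · simp [substP, hYX, fpv] at ha ⊢; tauto
    · simp [substP, hYX, fpv] at ha ⊢
      subst ha; exact Or.inl ⟨rfl, hYX⟩

def actNew : Act → Set Chan
  | .recv _ d => {d}
  | .alloc c => {c}
  | _ => ∅

def subjOK (P : Proc) : Act → Prop
  | .send c d => c ∈ consts P ∧ d ∈ consts P
  | .recv c _ => c ∈ consts P
  | .fault => False
  | _ => True

lemma step_main {P α P'} (h : Step P α P') :
    (fcv P = ∅ → fpv P = ∅ →
      fcv P' = ∅ ∧ fpv P' = ∅ ∧ consts P' ⊆ consts P ∪ actNew α) ∧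
    subjOK P α := by
  induction h with
  | send c d Q rest =>
    constructor
    · intro hfc hfp
      simp [fcv, fpv] at hfc hfp
      refine ⟨hfc.1.2, hfp.1, ?_⟩
      intro a ha; simp [consts]; tauto
    · simp [subjOK, consts, chansE]
  | recv c d x Q rest =>
    constructor
    · intro hfc hfp
      simp [fcv, fpv] at hfc hfp
      refine ⟨?_, ?_, ?_⟩
      · have h1 := fcv_substC Q x d
        rw [hfc.1.2] at h1; exact Set.subset_eq_empty h1 rfl
      · have h1 := fpv_substC Q x d
        rw [hfp.1] at h1; exact Set.subset_eq_empty h1 rfl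
      · intro a ha
        have := consts_substC Q x d ha
        simp [consts, actNew] at this ⊢; tauto
    · simp [subjOK, consts, chansE]
  | sumRest π Q hst ih =>
    constructor
    · intro hfc hfp
      cases π with
      | out e e' =>
        simp [fcv, fpv] at hfc hfp
        obtain ⟨h1, h2, h3⟩ := ih.1 hfc.2 hfp.2
        refine ⟨h1, h2, ?_⟩
        intro a ha; have := h3 ha; simp [consts] at this ⊢; tauto
      | inp e y =>
        simp [fcv, fpv] at hfc hfp
        obtain ⟨h1, h2, h3⟩ := ih.1 hfc.2 hfp.2
        refine ⟨h1, h2, ?_⟩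
        intro a ha; have := h3 ha; simp [consts] at this ⊢; tauto
    · have h2 := ih.2
      cases ‹Act› <;> cases π <;>
        simp [subjOK, consts] at h2 ⊢ <;> tauto
  | chooseL Q R =>
    constructor
    · intro hfc hfp
      simp [fcv, fpv] at hfc hfp
      refine ⟨hfc.1, hfp.1, ?_⟩
      intro a ha; simp [consts]; tauto
    · trivial
  | chooseR Q R =>
    constructor
    · intro hfc hfp
      simp [fcv, fpv] at hfc hfp
      refine ⟨hfc.2, hfp.2, ?_⟩
      intro a ha; simp [consts]; tauto
    · trivial
  | alloc c x Q =>
    constructor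
    · intro hfc hfp
      simp [fcv, fpv] at hfc hfp
      refine ⟨?_, ?_, ?_⟩
      · have h1 := fcv_substC Q x c
        rw [hfc] at h1; exact Set.subset_eq_empty h1 rfl
      · have h1 := fpv_substC Q x c
        rw [hfp] at h1; exact Set.subset_eq_empty h1 rfl
      · intro a ha
        have := consts_substC Q x c ha
        simp [consts, actNew] at this ⊢; tauto
    · trivial
  | unfold X Q =>
    constructor
    · intro hfc hfp
      simp [fcv, fpv] at hfc hfp
      refine ⟨?_, ?_, ?_⟩
      · have h1 := fcv_substP Q X (.fix X Q)
        simp [fcv, hfc] at h1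
        exact h1
      · have h1 := fpv_substP Q X (.fix X Q)
        simp [fpv, hfp] at h1
        exact h1
      · intro a ha
        have := consts_substP Q X (.fix X Q) ha
        simp [consts, actNew] at this ⊢; tauto
    · trivial
  | parL Q hst ih =>
    constructor
    · intro hfc hfp
      simp [fcv, fpv] at hfc hfp
      obtain ⟨h1, h2, h3⟩ := ih.1 hfc.1 hfp.1
      refine ⟨by simp [fcv, h1, hfc.2], by simp [fpv, h2, hfp.2], ?_⟩
      intro a ha; simp [consts] at ha ⊢
      rcases ha with h | h
      · have := h3 h; simp at this; tauto
      · tauto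
    · have := ih.2
      cases ‹Act› <;> simp [subjOK, consts] at this ⊢ <;> tauto
  | parR Q hst ih =>
    constructor
    · intro hfc hfp
      simp [fcv, fpv] at hfc hfp
      obtain ⟨h1, h2, h3⟩ := ih.1 hfc.2 hfp.2
      refine ⟨by simp [fcv, h1, hfc.1], by simp [fpv, h2, hfp.1], ?_⟩
      intro a ha; simp [consts] at ha ⊢
      rcases ha with h | h
      · tauto
      · have := h3 h; simp at this; tauto
    · have := ih.2
      cases ‹Act› <;> simp [subjOK, consts] at this ⊢ <;> tauto
  | @comm P1 γ P1' Q1 δ Q1' hP hQ hd ihP ihQ =>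
    refine ⟨?_, trivial⟩
    intro hfc hfp
    simp [fcv, fpv] at hfc hfp
    obtain ⟨p1, p2, p3⟩ := ihP.1 hfc.1 hfp.1
    obtain ⟨q1, q2, q3⟩ := ihQ.1 hfc.2 hfp.2
    refine ⟨by simp [fcv, p1, q1], by simp [fpv, p2, q2], ?_⟩
    cases hγ : γ with
    | send c d =>
      subst hγ
      simp [dual] at hd; subst hd
      have hs := ihP.2
      simp [subjOK] at hs
      intro a ha
      simp [consts, actNew] at ha ⊢
      rcases ha with h | h
      · have := p3 h; simp [actNew] at this; tauto
      · have := q3 h; simp [actNew] at this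
        rcases this with h' | h'
        all_goals first
          | exact Or.inr h'
          | (subst h'; exact Or.inl hs.2)
    | recv c d =>
      subst hγ
      simp [dual] at hd; subst hd
      have hs := ihQ.2
      simp [subjOK] at hs
      intro a ha
      simp [consts, actNew] at ha ⊢
      rcases ha with h | h
      · have := p3 h; simp [actNew] at this
        rcases this with h' | h'
        all_goals first
          | exact Or.inl h'
          | (subst h'; exact Or.inr hs.2)
      · have := q3 h; simp [actNew] at this; tauto
    | alloc c => subst hγ; simp [dual] at hd
    | tau => subst hγ; simp [dual] at hd
    | fault => subst hγ; simp [dual] at hd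


lemma dom_upd (σ : Resource) (d : Chan) (o : Own) :
    σ.dom ⊆ (upd σ d o).dom ∧ d ∈ (upd σ d o).dom := by
  constructor
  · intro a ha
    simp [Resource.dom, upd] at ha ⊢
    by_cases h : a = d <;> simp [h]; exact ha
  · simp [Resource.dom, upd]

lemma act_ok_dom {α : Act} {σ σ' : Resource} (h : act α σ = ARes.ok σ') :
    σ.dom ⊆ σ'.dom ∧ actNew α ⊆ σ'.dom := by
  cases α with
  | send c d =>
    simp [act] at h
    split at h
    · split at h
      · cases h
        exact ⟨(dom_upd σ d Own.pub).1, by simp [actNew]⟩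
      · cases h
    · cases h
  | recv c d =>
    simp [act] at h
    split at h
    · split at h
      · cases h
        refine ⟨(dom_upd σ d Own.pub).1, ?_⟩
        intro a ha; simp [actNew] at ha; rw [ha]
        exact (dom_upd σ d Own.pub).2
      · cases h
    · cases h
  | alloc c =>
    simp [act] at h
    split at h
    · cases h
    · cases h
      refine ⟨(dom_upd σ c Own.pri).1, ?_⟩
      intro a ha; simp [actNew] at ha; rw [ha]
      exact (dom_upd σ c Own.pri).2
  | tau =>
    simp [act] at h; cases h
    simp [actNew]
  | fault => simp [act] at h

lemma not_top {P α P'} (hst : Step P α P') (σ : Resource)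
    (hdom : consts P ⊆ σ.dom) : act α σ ≠ ARes.top := by
  have hs := (step_main hst).2
  cases α with
  | send c d =>
    simp [subjOK] at hs
    have hc : (σ c).isSome := hdom hs.1
    have hd : (σ d).isSome := hdom hs.2
    simp [act, hc, hd]
    split <;> simp
  | recv c d =>
    simp [subjOK] at hs
    have hc : (σ c).isSome := hdom hs
    simp [act, hc]
    split <;> simp
  | alloc c => simp [act]; split <;> simp
  | tau => simp [act]
  | fault => exact absurd hs (by simp [subjOK])

theorem safety_preservation (σ : Resource) (P : Proc) (h : Safe σ P) :
    (∀ P' σ', ¬ RStep P σ Act.fault P' σ') ∧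
    (∀ α P' σ', RStep P σ α P' σ' → Safe σ' P') := by
  obtain ⟨⟨hfc, hfp⟩, hdom⟩ := h
  constructor
  · intro P' σ' hr
    cases hr with
    | step hst hok =>
      exact absurd hok (by
        have := (step_main hst).2
        simp [subjOK] at this)
    | fault hst htop => exact not_top hst σ hdom htop
  · intro α P' σ' hr
    cases hr with
    | step hst hok =>
      obtain ⟨h1, h2, h3⟩ := (step_main hst).1 hfc hfp
      obtain ⟨hmono, hnew⟩ := act_ok_dom hok
      refine ⟨⟨h1, h2⟩, ?_⟩
      intro a ha
      have := h3 ha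
      simp at this
      rcases this with hh | hh
      · exact hmono (hdom hh)
      · exact hnew hh
    | fault hst htop => exact absurd htop (not_top hst σ hdom)
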